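/- arXiv:1309.7469 — 4 statements merged into one kernel-verified Lean document; each statement's English description precedes it below -/
import Mathlib

section
/- The identity element in a unital Banach algebra is not a commutator; that is, there do not exist elements x, y of the algebra with xy - yx = 1. -/
/-!
Wielandt's argument: from `x * y - y * x = 1` one gets `x * y ^ (n + 1) - y ^ (n + 1) * x =
(n + 1) • y ^ n`. Taking norms, `(n + 1) * ‖y ^ n‖ ≤ 2 * ‖x‖ * ‖y‖ * ‖y ^ n‖`, so `y ^ n = 0` once
`n + 1 > 2 * ‖x‖ * ‖y‖`. Reading the same identity backwards in a torsion-free ring,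
`y ^ (n + 1) = 0` forces `y ^ n = 0`, and descending to `y ^ 0 = 1` gives `1 = 0`.
-/

theorem commutator_pow_succ_of_commutator_eq_one {R : Type*} [Ring R] {x y : R}
    (h : x * y - y * x = 1) (n : ℕ) :
    x * y ^ (n + 1) - y ^ (n + 1) * x = (n + 1) • y ^ n := by
  induction n with
  | zero => simpa using h
  | succ n ih =>
    calc x * y ^ (n + 2) - y ^ (n + 2) * x
        = (x * y ^ (n + 1) - y ^ (n + 1) * x) * y + y ^ (n + 1) * (x * y - y * x) := by
          rw [pow_succ y (n + 1)]; noncomm_ring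
      _ = (n + 2) • y ^ (n + 1) := by
          rw [ih, h, smul_mul_assoc, ← pow_succ, mul_one, ← succ_nsmul]

theorem not_isNilpotent_of_commutator_eq_one {R : Type*} [Ring R] [IsAddTorsionFree R]
    [Nontrivial R] {x y : R} (h : x * y - y * x = 1) : ¬ IsNilpotent y := by
  rintro ⟨n, hn⟩
  suffices ∀ m, y ^ m = 0 → y ^ 0 = 0 from one_ne_zero (pow_zero y ▸ this n hn)
  intro m
  induction m with
  | zero => exact id
  | succ m ih =>
    intro hm
    refine ih ((nsmul_eq_zero_iff_right m.succ_ne_zero).mp ?_)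
    rw [← commutator_pow_succ_of_commutator_eq_one h, hm, mul_zero, zero_mul, sub_zero]

theorem isNilpotent_of_commutator_eq_one {A : Type*} [NormedRing A] [NormedSpace ℝ A]
    {x y : A} (h : x * y - y * x = 1) : IsNilpotent y := by
  obtain ⟨n, hn⟩ := exists_nat_gt (2 * ‖x‖ * ‖y‖)
  refine ⟨n, norm_le_zero_iff.mp ?_⟩
  have hbound : ((n : ℝ) + 1) * ‖y ^ n‖ ≤ 2 * ‖x‖ * ‖y‖ * ‖y ^ n‖ :=
    calc ((n : ℝ) + 1) * ‖y ^ n‖ = ‖x * y ^ (n + 1) - y ^ (n + 1) * x‖ := by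
          rw [commutator_pow_succ_of_commutator_eq_one h, RCLike.norm_nsmul ℝ]; ring
      _ ≤ ‖x‖ * ‖y ^ (n + 1)‖ + ‖y ^ (n + 1)‖ * ‖x‖ :=
          (norm_sub_le _ _).trans (add_le_add (norm_mul_le _ _) (norm_mul_le _ _))
      _ ≤ ‖x‖ * (‖y‖ * ‖y ^ n‖) + ‖y‖ * ‖y ^ n‖ * ‖x‖ := by
          have hpow : ‖y ^ (n + 1)‖ ≤ ‖y‖ * ‖y ^ n‖ := pow_succ' y n ▸ norm_mul_le y (y ^ n)
          gcongr
      _ = 2 * ‖x‖ * ‖y‖ * ‖y ^ n‖ := by ring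
  nlinarith [norm_nonneg (y ^ n)]

theorem identity_is_not_a_commutator_general {A : Type*} [NormedRing A]
    [NormedAlgebra ℝ A] [Nontrivial A] :
    ¬ ∃ x y : A, x * y - y * x = 1 := by
  rintro ⟨x, y, h⟩
  have : IsAddTorsionFree A := .of_isTorsionFree ℝ A
  exact not_isNilpotent_of_commutator_eq_one h (isNilpotent_of_commutator_eq_one h)

/-- **Wintner's theorem.** The identity element in a unital Banach algebra is not a
commutator: there do not exist `x y` with `x * y - y * x = 1`. -/
theorem identity_is_not_a_commutator {A : Type*} [NormedRing A] [CompleteSpace A]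
    [NormedAlgebra ℝ A] [Nontrivial A] :
    ¬ ∃ x y : A, x * y - y * x = 1 :=
  identity_is_not_a_commutator_general
end

section
/- A bounded linear operator T : X → Y between Banach spaces is strictly singular if and only if every infinite-dimensional closed subspace Z of X contains a further infinite-dimensional closed subspace Z′ on which the restriction of T is compact. -/
/-- A bounded operator `T : X → Y` is strictly singular if it is not bounded below on any
infinite-dimensional closed subspace of `X`. -/
def StrictlySingular {X Y : Type*} [NormedAddCommGroup X] [NormedSpace ℝ X]
    [NormedAddCommGroup Y] [NormedSpace ℝ Y] (T : X →L[ℝ] Y) : Prop :=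
  ∀ Z : Submodule ℝ X, IsClosed (Z : Set X) → ¬ FiniteDimensional ℝ Z →
    ¬ ∃ c : ℝ, 0 < c ∧ ∀ z ∈ Z, c * ‖z‖ ≤ ‖T z‖

/-!
If `T` is bounded below on `Z'`, it is a uniform embedding of `Z'`; if it is also compact there,
some neighbourhood of `0` in `Z'` is totally bounded, and Riesz's theorem makes `Z'`
finite-dimensional.

Conversely, if `T` is strictly singular, Mazur's construction picks vectors `ζ n` in `Z` with
`‖T (ζ n)‖ < 2⁻ⁿ ‖ζ n‖`, each in a finite-codimensional subspace on which the projection away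
from the span of the earlier ones has norm at most `2`. Then `(ζ n)` is a basic sequence, so the
coefficients of a vector `x` in its span are bounded by `4 ‖x‖`, and `T` maps the unit ball of
the span to within `8 * 2⁻ⁿ` of the image of a bounded subset of a finite-dimensional space.
Hence the image is totally bounded and `T` is compact on the closed span.
-/

open Metric Filter Topology Finset

theorem FiniteDimensional.of_isCompactOperator_of_isUniformInducing
    (𝕜 : Type*) {E F : Type*} [NontriviallyNormedField 𝕜] [CompleteSpace 𝕜]
    [AddCommGroup E] [Module 𝕜 E] [UniformSpace E] [T2Space E] [IsUniformAddGroup E]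
    [ContinuousSMul 𝕜 E] [UniformSpace F] {f : E → F}
    (hf : IsCompactOperator f) (hu : IsUniformInducing f) : FiniteDimensional 𝕜 E := by
  obtain ⟨K, hK, hmem⟩ := hf
  exact .of_totallyBounded_nhds_zero 𝕜 hmem (totallyBounded_preimage hu hK.totallyBounded)

theorem Metric.totallyBounded_of_forall_approx {α : Type*} [PseudoMetricSpace α] {s : Set α}
    (h : ∀ ε > 0, ∃ t, TotallyBounded t ∧ ∀ x ∈ s, ∃ y ∈ t, dist x y < ε) :
    TotallyBounded s := by
  refine totallyBounded_iff.2 fun ε hε => ?_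
  obtain ⟨t, ht, hst⟩ := h (ε / 2) (half_pos hε)
  obtain ⟨u, hu, htu⟩ := totallyBounded_iff.1 ht (ε / 2) (half_pos hε)
  refine ⟨u, hu, fun x hx => ?_⟩
  obtain ⟨y, hyt, hxy⟩ := hst x hx
  obtain ⟨z, hzu, hyz⟩ := Set.mem_iUnion₂.1 (htu hyt)
  refine Set.mem_iUnion₂.2 ⟨z, hzu, ?_⟩
  calc dist x z ≤ dist x y + dist y z := dist_triangle x y z
    _ < ε / 2 + ε / 2 := add_lt_add hxy hyz
    _ = ε := add_halves ε

theorem Submodule.not_finiteDimensional_inf {K V : Type*} [DivisionRing K] [AddCommGroup V]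
    [Module K V] {Z W : Submodule K V} [FiniteDimensional K (V ⧸ W)]
    (hZ : ¬ FiniteDimensional K Z) : ¬ FiniteDimensional K ↥(Z ⊓ W) := by
  simp only [← Submodule.fg_iff_finiteDimensional] at hZ ⊢
  refine fun hZW => hZ (Submodule.fg_of_fg_map_of_fg_inf_ker W.mkQ (IsNoetherian.noetherian _) ?_)
  rwa [Submodule.ker_mkQ]

theorem Finsupp.eventually_sum_range_eq_sum {R M : Type*} [Semiring R]
    [AddCommMonoid M] [Module R M] (v : ℕ → M) (l : ℕ →₀ R) :
    ∀ᶠ m in atTop, ∑ i ∈ range m, l i • v i = l.sum fun i a => a • v i := by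
  obtain ⟨m₀, hm₀⟩ := l.support.exists_nat_subset_range
  filter_upwards [eventually_ge_atTop m₀] with m hm
  rw [Finsupp.sum_of_support_subset l (hm₀.trans (range_subset_range.2 hm)) _ (by simp)]

theorem Submodule.exists_eventually_sum_range_eq_of_mem_span {R M : Type*} [Semiring R]
    [AddCommMonoid M] [Module R M] {v : ℕ → M} {x : M} (hx : x ∈ span R (Set.range v)) :
    ∃ c : ℕ → R, ∀ᶠ m in atTop, ∑ i ∈ range m, c i • v i = x := by
  obtain ⟨l, rfl⟩ := Finsupp.mem_span_range_iff_exists_finsupp.1 hx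
  exact ⟨l, Finsupp.eventually_sum_range_eq_sum v l⟩

theorem LinearIndependent.not_finiteDimensional_of_span_le {K V ι : Type*} [DivisionRing K]
    [AddCommGroup V] [Module K V] [Infinite ι] {v : ι → V} (hv : LinearIndependent K v)
    {Z : Submodule K V} (hZ : Submodule.span K (Set.range v) ≤ Z) : ¬ FiniteDimensional K Z :=
  fun _ => have := Submodule.finiteDimensional_of_le hZ
    (linearIndependent_span hv).finite.false

section

variable {X : Type*} [NormedAddCommGroup X] [NormedSpace ℝ X]

theorem isCompactOperator_restrict_topologicalClosure {Y : Type*} [NormedAddCommGroup Y]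
    [NormedSpace ℝ Y] [CompleteSpace Y] (T : X →L[ℝ] Y) (V : Submodule ℝ X)
    (hV : TotallyBounded (T '' (V ∩ ball 0 1))) :
    IsCompactOperator fun z : V.topologicalClosure => T z := by
  rw [isCompactOperator_iff_exists_mem_nhds_isCompact_closure_image]
  refine ⟨ball 0 1, ball_mem_nhds 0 one_pos,
    (hV.closure.isCompact_of_isClosed isClosed_closure).of_isClosed_subset isClosed_closure
      (closure_minimal ?_ isClosed_closure)⟩
  rintro _ ⟨z, hz, rfl⟩
  have hzV : (z : X) ∈ closure (V ∩ ball 0 1) := by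
    rw [Set.inter_comm]
    refine isOpen_ball.inter_closure ⟨by simpa using hz, ?_⟩
    rw [← Submodule.topologicalClosure_coe]
    exact z.2
  exact image_closure_subset_closure_image T.continuous ⟨z, hzV, rfl⟩

/-- `W` is the common kernel of norming functionals at the points of a `1/2`-net of the unit
sphere of `F`. -/
theorem exists_isClosed_finiteDimensional_quotient_norm_le_two_mul (F : Submodule ℝ X)
    [FiniteDimensional ℝ F] :
    ∃ W : Submodule ℝ X, IsClosed (W : Set X) ∧ FiniteDimensional ℝ (X ⧸ W) ∧
      ∀ a ∈ F, ∀ w ∈ W, ‖a‖ ≤ 2 * ‖a + w‖ := by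
  have hS : IsCompact (Subtype.val '' sphere (0 : F) 1) :=
    (isCompact_sphere 0 1).image continuous_subtype_val
  obtain ⟨t, htS, ht, hcover⟩ := finite_approx_of_totallyBounded hS.totallyBounded 2⁻¹ (by norm_num)
  have := ht.to_subtype
  choose g hg hgy using fun y : X => exists_dual_vector'' ℝ y
  let Φ : X →L[ℝ] (t → ℝ) := ContinuousLinearMap.pi fun y => g y
  refine ⟨(Φ : X →ₗ[ℝ] t → ℝ).ker, Φ.isClosed_ker, ?_, ?_⟩
  · exact (Φ : X →ₗ[ℝ] t → ℝ).quotKerEquivRange.symm.finiteDimensional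
  intro a ha w hw
  rcases eq_or_ne a 0 with rfl | ha0
  · simp
  have hu : ‖a‖⁻¹ • a ∈ Subtype.val '' sphere (0 : F) 1 :=
    ⟨⟨_, F.smul_mem _ ha⟩, by simp [norm_smul, ha0], rfl⟩
  obtain ⟨y, hyt, hy⟩ := Set.mem_iUnion₂.1 (hcover hu)
  have hgy1 : g y y = 1 := by
    obtain ⟨y', hy', rfl⟩ := htS hyt
    simpa [hgy] using hy'
  have hgw : g y w = 0 := congr_fun (LinearMap.mem_ker.1 hw) ⟨y, hyt⟩
  have hgu : 2⁻¹ ≤ g y (‖a‖⁻¹ • a) := by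
    have h := (g y).le_of_opNorm_le (hg y) (‖a‖⁻¹ • a - y)
    rw [Real.norm_eq_abs, one_mul, map_sub, hgy1, ← dist_eq_norm] at h
    linarith [neg_abs_le (g y (‖a‖⁻¹ • a) - 1), mem_ball.1 hy]
  calc ‖a‖ = 2 * (‖a‖ * 2⁻¹) := by ring
    _ ≤ 2 * (‖a‖ * g y (‖a‖⁻¹ • a)) := by gcongr
    _ = 2 * g y (a + w) := by rw [map_add, hgw, add_zero, map_smul, smul_eq_mul,
        mul_inv_cancel_left₀ (norm_ne_zero_iff.2 ha0)]
    _ ≤ 2 * ‖a + w‖ := by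
        gcongr
        simpa using (Real.le_norm_self _).trans ((g y).le_of_opNorm_le (hg y) (a + w))

/-- Grünblum's criterion: for nonzero `ζ n` this says that `ζ` is a basic sequence with basis
constant at most `K`. -/
def IsBasicSeq (K : ℝ) (ζ : ℕ → X) : Prop :=
  ∀ (c : ℕ → ℝ) {m n : ℕ}, m ≤ n → ‖∑ i ∈ range m, c i • ζ i‖ ≤ K * ‖∑ i ∈ range n, c i • ζ i‖

namespace IsBasicSeq

variable {K : ℝ} {ζ : ℕ → X}

theorem of_forall_norm_le (F W : ℕ → Submodule ℝ X)
    (hF : ∀ i n, i < n → ζ i ∈ F n) (hW : ∀ n k, n ≤ k → ζ k ∈ W n)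
    (h : ∀ n, ∀ a ∈ F n, ∀ w ∈ W n, ‖a‖ ≤ K * ‖a + w‖) : IsBasicSeq K ζ := by
  intro c m n hmn
  rw [← sum_range_add_sum_Ico _ hmn]
  exact h m _ (Submodule.sum_mem _ fun i hi => Submodule.smul_mem _ _ (hF i m (mem_range.1 hi)))
    _ (Submodule.sum_mem _ fun i hi => Submodule.smul_mem _ _ (hW m i (mem_Ico.1 hi).1))

theorem norm_smul_le (hζ : IsBasicSeq K ζ) (c : ℕ → ℝ) {n m : ℕ} (hnm : n < m) :
    ‖c n • ζ n‖ ≤ 2 * K * ‖∑ i ∈ range m, c i • ζ i‖ := by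
  rw [← add_sub_cancel_left (∑ i ∈ range n, c i • ζ i) (c n • ζ n), ← sum_range_succ]
  calc _ ≤ ‖∑ i ∈ range (n + 1), c i • ζ i‖ + ‖∑ i ∈ range n, c i • ζ i‖ := norm_sub_le _ _
    _ ≤ K * ‖∑ i ∈ range m, c i • ζ i‖ + K * ‖∑ i ∈ range m, c i • ζ i‖ :=
      add_le_add (hζ c hnm) (hζ c hnm.le)
    _ = 2 * K * ‖∑ i ∈ range m, c i • ζ i‖ := by ring

theorem linearIndependent (hζ : IsBasicSeq K ζ) (hζ0 : ∀ n, ζ n ≠ 0) : LinearIndependent ℝ ζ := by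
  refine linearIndependent_iff.2 fun l hl => Finsupp.ext fun n => ?_
  rw [Finsupp.linearCombination_apply] at hl
  obtain ⟨m, hm, hnm⟩ :=
    ((Finsupp.eventually_sum_range_eq_sum ζ l).and (eventually_gt_atTop n)).exists
  have := hζ.norm_smul_le l hnm
  rw [hm, hl, norm_zero, mul_zero, norm_le_zero_iff, smul_eq_zero] at this
  exact this.resolve_right (hζ0 n)

theorem norm_map_sub_le {Y : Type*} [NormedAddCommGroup Y] [NormedSpace ℝ Y]
    (hζ : IsBasicSeq K ζ) (hK : 0 ≤ K) (T : X →L[ℝ] Y) {r : ℝ} (hr₀ : 0 ≤ r) (hr₁ : r < 1)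
    (hT : ∀ n, ‖T (ζ n)‖ ≤ r ^ n * ‖ζ n‖) (c : ℕ → ℝ) {n m : ℕ} (hnm : n ≤ m) :
    ‖T (∑ i ∈ range m, c i • ζ i) - T (∑ i ∈ range n, c i • ζ i)‖ ≤
      2 * K * ‖∑ i ∈ range m, c i • ζ i‖ * (r ^ n / (1 - r)) := by
  set M := 2 * K * ‖∑ i ∈ range m, c i • ζ i‖
  rw [← map_sub, ← sum_range_add_sum_Ico _ hnm, add_sub_cancel_left, map_sum]
  calc _ ≤ ∑ i ∈ Ico n m, ‖T (c i • ζ i)‖ := norm_sum_le _ _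
    _ ≤ ∑ i ∈ Ico n m, M * r ^ i := sum_le_sum fun i hi => ?_
    _ = M * ∑ i ∈ Ico n m, r ^ i := (mul_sum _ _ _).symm
    _ ≤ M * (r ^ n / (1 - r)) :=
      mul_le_mul_of_nonneg_left (geom_sum_Ico_le_of_lt_one hr₀ hr₁) (by positivity)
  calc ‖T (c i • ζ i)‖ = ‖c i‖ * ‖T (ζ i)‖ := by rw [map_smul, norm_smul]
    _ ≤ ‖c i‖ * (r ^ i * ‖ζ i‖) := mul_le_mul_of_nonneg_left (hT i) (norm_nonneg _)
    _ = ‖c i • ζ i‖ * r ^ i := by rw [norm_smul]; ring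
    _ ≤ M * r ^ i :=
      mul_le_mul_of_nonneg_right (hζ.norm_smul_le c (mem_Ico.1 hi).2) (by positivity)

theorem totallyBounded_image_span_inter_ball {Y : Type*} [NormedAddCommGroup Y]
    [NormedSpace ℝ Y] (hζ : IsBasicSeq K ζ) (hK : 0 ≤ K) (T : X →L[ℝ] Y) {r : ℝ} (hr₀ : 0 ≤ r)
    (hr₁ : r < 1) (hT : ∀ n, ‖T (ζ n)‖ ≤ r ^ n * ‖ζ n‖) :
    TotallyBounded (T '' (Submodule.span ℝ (Set.range ζ) ∩ ball 0 1)) := by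
  classical
  refine Metric.totallyBounded_of_forall_approx fun ε hε => ?_
  have hlim : Tendsto (fun n => 2 * K * (r ^ n / (1 - r))) atTop (𝓝 0) := by
    simpa using ((tendsto_pow_atTop_nhds_zero_of_lt_one hr₀ hr₁).div_const (1 - r)).const_mul
      (2 * K)
  obtain ⟨n, hn⟩ := (hlim.eventually (gt_mem_nhds hε)).exists
  let F := Submodule.span ℝ (((range n).image ζ : Finset X) : Set X)
  refine ⟨T '' (Subtype.val '' closedBall (0 : F) K),
    (((isCompact_closedBall _ _).image continuous_subtype_val).image T.continuous).totallyBounded,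
    ?_⟩
  rintro _ ⟨x, ⟨hxV, hx⟩, rfl⟩
  rw [mem_ball_zero_iff] at hx
  obtain ⟨c, hc⟩ := Submodule.exists_eventually_sum_range_eq_of_mem_span hxV
  obtain ⟨m, rfl, hnm⟩ := (hc.and (eventually_ge_atTop n)).exists
  have hmem : ∑ i ∈ range n, c i • ζ i ∈ F := Submodule.sum_mem _ fun i hi =>
    Submodule.smul_mem _ _ (Submodule.subset_span (mem_coe.2 (mem_image_of_mem ζ hi)))
  refine ⟨_, ⟨_, ⟨⟨_, hmem⟩, ?_, rfl⟩, rfl⟩, ?_⟩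
  · rw [mem_closedBall_zero_iff, Submodule.coe_norm]
    exact (hζ c hnm).trans (mul_le_of_le_one_right hK hx.le)
  · rw [dist_eq_norm]
    calc _ ≤ 2 * K * ‖∑ i ∈ range m, c i • ζ i‖ * (r ^ n / (1 - r)) :=
          hζ.norm_map_sub_le hK T hr₀ hr₁ hT c hnm
      _ ≤ 2 * K * (r ^ n / (1 - r)) := by
          rw [mul_right_comm]
          exact mul_le_of_le_one_right (by positivity) hx.le
      _ < ε := hn

end IsBasicSeq

/-- A stage of Mazur's construction: the vectors chosen so far span `F`, the later ones are
taken in `W`, and the projection of `F ⊕ W` onto `F` has norm at most `2`. -/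
structure MazurStage (Z : Submodule ℝ X) where
  F : Submodule ℝ X
  W : Submodule ℝ X
  finiteDimensional_F : FiniteDimensional ℝ F
  W_le : W ≤ Z
  isClosed_W : IsClosed (W : Set X)
  not_finiteDimensional_W : ¬ FiniteDimensional ℝ W
  norm_le : ∀ a ∈ F, ∀ w ∈ W, ‖a‖ ≤ 2 * ‖a + w‖

namespace MazurStage

variable {Z : Submodule ℝ X}

def initial (hZc : IsClosed (Z : Set X)) (hZ : ¬ FiniteDimensional ℝ Z) : MazurStage Z where
  F := ⊥
  W := Z
  finiteDimensional_F := inferInstance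
  W_le := le_rfl
  isClosed_W := hZc
  not_finiteDimensional_W := hZ
  norm_le a ha w _ := by simp [(Submodule.mem_bot ℝ).1 ha]

theorem exists_next (s : MazurStage Z) (z : X) :
    ∃ s' : MazurStage Z, s'.F = s.F ⊔ Submodule.span ℝ {z} ∧ s'.W ≤ s.W := by
  have := s.finiteDimensional_F
  obtain ⟨N, hNc, hN, hnorm⟩ :=
    exists_isClosed_finiteDimensional_quotient_norm_le_two_mul (s.F ⊔ Submodule.span ℝ {z})
  exact ⟨⟨_, s.W ⊓ N, inferInstance, inf_le_left.trans s.W_le, s.isClosed_W.inter hNc,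
    Submodule.not_finiteDimensional_inf s.not_finiteDimensional_W,
    fun a ha w hw => hnorm a ha w hw.2⟩, rfl, inf_le_left⟩

end MazurStage

theorem exists_isBasicSeq_forall_mem {Z : Submodule ℝ X} (hZc : IsClosed (Z : Set X))
    (hZ : ¬ FiniteDimensional ℝ Z) (P : ℕ → X → Prop)
    (hP : ∀ n (W : Submodule ℝ X), W ≤ Z → IsClosed (W : Set X) → ¬ FiniteDimensional ℝ W →
      ∃ z ∈ W, P n z) :
    ∃ ζ : ℕ → X, IsBasicSeq 2 ζ ∧ ∀ n, ζ n ∈ Z ∧ P n (ζ n) := by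
  choose z hzW hzP using fun n (s : MazurStage Z) =>
    hP n s.W s.W_le s.isClosed_W s.not_finiteDimensional_W
  choose next hnextF hnextW using fun n (s : MazurStage Z) => s.exists_next (z n s)
  let s : ℕ → MazurStage Z := fun n => Nat.rec (MazurStage.initial hZc hZ) next n
  have hF : Monotone fun n => (s n).F :=
    monotone_nat_of_le_succ fun n => le_of_le_of_eq le_sup_left (hnextF n (s n)).symm
  have hW : Antitone fun n => (s n).W := antitone_nat_of_succ_le fun n => hnextW n (s n)
  have hzF : ∀ i, z i (s i) ∈ (s (i + 1)).F := fun i => by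
    rw [show s (i + 1) = next i (s i) from rfl, hnextF]
    exact Submodule.mem_sup_right (Submodule.mem_span_singleton_self _)
  refine ⟨fun n => z n (s n), IsBasicSeq.of_forall_norm_le (fun n => (s n).F)
    (fun n => (s n).W) (fun i n hin => hF hin (hzF i)) (fun n k hnk => hW hnk (hzW k (s k)))
    fun n => (s n).norm_le, fun n => ⟨(s n).W_le (hzW n (s n)), hzP n (s n)⟩⟩

theorem StrictlySingular.exists_norm_apply_lt {Y : Type*} [NormedAddCommGroup Y]
    [NormedSpace ℝ Y] {T : X →L[ℝ] Y} (hT : StrictlySingular T) {W : Submodule ℝ X}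
    (hWc : IsClosed (W : Set X)) (hW : ¬ FiniteDimensional ℝ W) {c : ℝ} (hc : 0 < c) :
    ∃ z ∈ W, ‖T z‖ < c * ‖z‖ := by
  have := hT W hWc hW
  push Not at this
  exact this c hc

end

theorem strictlySingular_iff_compact_restriction_general {X Y : Type*} [NormedAddCommGroup X]
    [NormedSpace ℝ X] [NormedAddCommGroup Y] [NormedSpace ℝ Y]
    [CompleteSpace Y] (T : X →L[ℝ] Y) :
    StrictlySingular T ↔
      ∀ Z : Submodule ℝ X, IsClosed (Z : Set X) → ¬ FiniteDimensional ℝ Z →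
        ∃ Z' : Submodule ℝ X, Z' ≤ Z ∧ IsClosed (Z' : Set X) ∧ ¬ FiniteDimensional ℝ Z' ∧
          IsCompactOperator (fun z : Z' => T (z : X)) := by
  refine ⟨fun hT Z hZc hZ => ?_, fun h Z hZc hZ ⟨c, hc, hbd⟩ => ?_⟩
  · obtain ⟨ζ, hζ, hζZ⟩ := exists_isBasicSeq_forall_mem hZc hZ
      (fun n z => ‖T z‖ < 2⁻¹ ^ n * ‖z‖) fun n W _ hWc hW => hT.exists_norm_apply_lt hWc hW
        (by positivity)
    have hζ0 : ∀ n, ζ n ≠ 0 := fun n h0 => by simpa [h0] using (hζZ n).2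
    have hζV : Submodule.span ℝ (Set.range ζ) ≤ Z :=
      Submodule.span_le.2 (Set.range_subset_iff.2 fun n => (hζZ n).1)
    exact ⟨_, Submodule.topologicalClosure_minimal _ hζV hZc,
      Submodule.isClosed_topologicalClosure _,
      (hζ.linearIndependent hζ0).not_finiteDimensional_of_span_le
        (Submodule.le_topologicalClosure _),
      isCompactOperator_restrict_topologicalClosure T _
        (hζ.totallyBounded_image_span_inter_ball zero_le_two T (by norm_num) (by norm_num)
          fun n => (hζZ n).2.le)⟩
  · obtain ⟨Z', hZ'Z, -, hZ', hcomp⟩ := h Z hZc hZ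
    have hT : AntilipschitzWith ⟨c⁻¹, by positivity⟩ (T.comp Z'.subtypeL) :=
      (T.comp Z'.subtypeL).antilipschitz_of_bound fun z =>
        (le_inv_mul_iff₀ hc).2 (hbd z (hZ'Z z.2))
    exact hZ' (.of_isCompactOperator_of_isUniformInducing ℝ hcomp
      (hT.isUniformInducing (T.comp Z'.subtypeL).uniformContinuous))

/-- A bounded operator `T : X → Y` between Banach spaces is strictly singular if and only
if every infinite-dimensional closed subspace `Z ⊆ X` contains a further
infinite-dimensional closed subspace `Z'` on which the restriction of `T` is compact. -/
theorem strictlySingular_iff_compact_restriction {X Y : Type*} [NormedAddCommGroup X]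
    [NormedSpace ℝ X] [CompleteSpace X] [NormedAddCommGroup Y] [NormedSpace ℝ Y]
    [CompleteSpace Y] (T : X →L[ℝ] Y) :
    StrictlySingular T ↔
      ∀ Z : Submodule ℝ X, IsClosed (Z : Set X) → ¬ FiniteDimensional ℝ Z →
        ∃ Z' : Submodule ℝ X, Z' ≤ Z ∧ IsClosed (Z' : Set X) ∧ ¬ FiniteDimensional ℝ Z' ∧
          IsCompactOperator (fun z : Z' => T (z : X)) :=
  strictlySingular_iff_compact_restriction_general T
end

section
/- Let X be a Banach space and T : X → X a bounded operator that fails to be upper semi-Fredholm. Then for every ε > 0 there exists an infinite-dimensional closed subspace Y_ε ⊆ X with ‖T|_{Y_ε}‖ < ε, and the restriction of T to Y_ε is compact. -/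
/-!
If `ker T` is infinite-dimensional, take `Y = ker T`. Otherwise `range T` is not closed, so `T`
is not bounded below on any closed subspace of finite codimension. Choosing unit vectors `x n`
one at a time in the common kernel of norming functionals of the earlier ones, with
`‖T (x n)‖ < ε / 4 * 4⁻¹ ^ n`, yields a triangular system, which a Gram–Schmidt step on the dual
side turns into biorthogonal functionals `c n` with `‖c n‖ ≤ 2 ^ n`. On the closed span `Y` of
the `x n`, `T` agrees with the nuclear operator `∑ c n ⊗ T (x n)`, which is compact and has norm
at most `ε / 2`.
-/

open Filter Set Finset

section Algebra

theorem linearIndependent_of_apply_eq_ite {R M ι : Type*} [CommRing R] [AddCommGroup M]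
    [Module R M] [DecidableEq ι] {c : ι → Module.Dual R M} {x : ι → M}
    (h : ∀ i j, c i (x j) = if i = j then 1 else 0) : LinearIndependent R x := by
  refine linearIndependent_iff.mpr fun l hl ↦ l.ext fun i ↦ ?_
  simpa [Finsupp.linearCombination_apply, Finsupp.sum, h] using congr_arg (c i) hl

theorem not_finiteDimensional_of_linearIndependent {K V ι : Type*} [DivisionRing K]
    [AddCommGroup V] [Module K V] [Infinite ι] {x : ι → V} (hli : LinearIndependent K x)
    {Y : Submodule K V} (hxY : ∀ i, x i ∈ Y) : ¬FiniteDimensional K Y := fun _ ↦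
  Infinite.not_finite
    (LinearIndependent.of_comp Y.subtype (v := fun i ↦ (⟨x i, hxY i⟩ : Y)) hli).finite

end Algebra

namespace ContinuousLinearMap

variable {𝕜 E F : Type*} [NontriviallyNormedField 𝕜] [CompleteSpace 𝕜]
  [NormedAddCommGroup E] [NormedSpace 𝕜 E] [NormedAddCommGroup F] [NormedSpace 𝕜 F]

theorem isClosed_range_of_le_norm_on_coFG [CompleteSpace E] (T : E →L[𝕜] F)
    {Z : Submodule 𝕜 E} [Z.CoFG] (hZ : IsClosed (Z : Set E)) {δ : ℝ} (hδ : 0 < δ)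
    (hT : ∀ z ∈ Z, δ * ‖z‖ ≤ ‖T z‖) :
    IsClosed ((LinearMap.range (T : E →ₗ[𝕜] F) : Submodule 𝕜 F) : Set F) := by
  have : CompleteSpace Z := hZ.completeSpace_coe
  have hanti : AntilipschitzWith ⟨δ⁻¹, by positivity⟩ (T ∘L Z.subtypeL) :=
    (T ∘L Z.subtypeL).antilipschitz_of_bound fun z ↦ (le_inv_mul_iff₀ hδ).2 (hT z z.2)
  refine LinearMap.isClosed_range_of_isClosed_map_of_finiteDimensional_quotient (s := Z) ?_
  convert hanti.isClosed_range (T ∘L Z.subtypeL).uniformContinuous using 1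
  ext y
  simp

theorem exists_forall_apply_eq_zero_norm_lt_of_not_isClosed_range [CompleteSpace E]
    (T : E →L[𝕜] F) (hT : ¬IsClosed ((LinearMap.range (T : E →ₗ[𝕜] F) : Submodule 𝕜 F) : Set F))
    (s : Finset (StrongDual 𝕜 E)) {δ : ℝ} (hδ : 0 < δ) :
    ∃ x, (∀ f ∈ s, f x = 0) ∧ ‖T x‖ < δ * ‖x‖ := by
  let Z := LinearMap.ker (pi fun f : s ↦ (f : StrongDual 𝕜 E) : E →ₗ[𝕜] s → 𝕜)
  have : Z.CoFG := Submodule.CoFG.ker _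
  have hmem : ∀ x, x ∈ Z ↔ ∀ f ∈ s, f x = 0 := fun x ↦ by
    simp [Z, funext_iff]
  by_contra! h
  exact hT <| T.isClosed_range_of_le_norm_on_coFG (isClosed_ker (pi _)) hδ
    fun z hz ↦ h z ((hmem z).1 hz)

end ContinuousLinearMap

section CompactOperator

variable {𝕜 E F ι : Type*} [NontriviallyNormedField 𝕜]
  [NormedAddCommGroup E] [NormedSpace 𝕜 E] [NormedAddCommGroup F] [NormedSpace 𝕜 F]
  {c : ι → StrongDual 𝕜 E} {v : ι → F}

theorem summable_smulRight_of_summable_norm_mul_norm [CompleteSpace F]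
    (h : Summable fun k ↦ ‖c k‖ * ‖v k‖) :
    Summable fun k ↦ (c k).smulRight (v k) :=
  .of_norm (by simpa only [ContinuousLinearMap.norm_smulRight_apply] using h)

theorem norm_tsum_smulRight_le (h : Summable fun k ↦ ‖c k‖ * ‖v k‖) :
    ‖∑' k, (c k).smulRight (v k)‖ ≤ ∑' k, ‖c k‖ * ‖v k‖ := by
  simpa only [ContinuousLinearMap.norm_smulRight_apply] using
    norm_tsum_le_tsum_norm (f := fun k ↦ (c k).smulRight (v k))
      (by simpa only [ContinuousLinearMap.norm_smulRight_apply] using h)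

theorem tsum_smulRight_apply_of_apply_eq_ite [CompleteSpace F] [DecidableEq ι] {x : ι → E}
    (hc : ∀ i j, c i (x j) = if i = j then 1 else 0) (h : Summable fun k ↦ ‖c k‖ * ‖v k‖)
    (j : ι) : (∑' k, (c k).smulRight (v k)) (x j) = v j := by
  have hS := (ContinuousLinearMap.apply 𝕜 F (x j)).hasSum
    (summable_smulRight_of_summable_norm_mul_norm h).hasSum
  have hsingle := hasSum_single (f := fun k ↦ c k (x j) • v k) j fun k hk ↦ by simp [hc, hk]
  simpa [hc] using hS.unique hsingle

theorem isCompactOperator_tsum_smulRight [ProperSpace 𝕜] [CompleteSpace F]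
    (h : Summable fun k ↦ ‖c k‖ * ‖v k‖) :
    IsCompactOperator ⇑(∑' k, (c k).smulRight (v k)) := by
  refine isCompactOperator_of_tendsto (summable_smulRight_of_summable_norm_mul_norm h).hasSum
    (Eventually.of_forall fun s ↦ ?_)
  refine Finset.sum_induction _ (fun A : E →L[𝕜] F ↦ IsCompactOperator A)
    (fun _ _ ↦ IsCompactOperator.add) isCompactOperator_zero fun k _ ↦ ?_
  exact (isCompactOperator_of_locallyCompactSpace_dom (c k)).continuous_comp
    (continuous_id.smul continuous_const)

end CompactOperator

section Biorthogonalize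

variable {𝕜 E : Type*} [NontriviallyNormedField 𝕜] [NormedAddCommGroup E] [NormedSpace 𝕜 E]

/-- Gram–Schmidt on the dual side: turns a triangular system (`f n (x n) = 1`, and
`f m (x n) = 0` for `m < n`) into a biorthogonal one. -/
noncomputable def biorthogonalize (f : ℕ → StrongDual 𝕜 E) (x : ℕ → E) (n : ℕ) :
    StrongDual 𝕜 E :=
  f n - ∑ k : Fin n, f n (x k) • biorthogonalize f x k

theorem biorthogonalize_eq (f : ℕ → StrongDual 𝕜 E) (x : ℕ → E) (n : ℕ) :
    biorthogonalize f x n = f n - ∑ k ∈ range n, f n (x k) • biorthogonalize f x k := by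
  rw [biorthogonalize, Fin.sum_univ_eq_sum_range (fun k ↦ f n (x k) • biorthogonalize f x k)]

theorem biorthogonalize_apply {f : ℕ → StrongDual 𝕜 E} {x : ℕ → E} (hdiag : ∀ n, f n (x n) = 1)
    (htriang : ∀ m n, m < n → f m (x n) = 0) (n m : ℕ) :
    biorthogonalize f x n (x m) = if n = m then 1 else 0 := by
  induction n using Nat.strong_induction_on with
  | _ n ih =>
    have hsum : ∑ k ∈ range n, f n (x k) * biorthogonalize f x k (x m) =
        if m < n then f n (x m) else 0 := by
      rw [sum_congr rfl fun k hk ↦ by rw [ih k (mem_range.1 hk)]]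
      simp [mul_ite]
    rw [biorthogonalize_eq]
    simp only [sub_apply, _root_.sum_apply, smul_apply, smul_eq_mul, hsum]
    rcases lt_trichotomy m n with h | rfl | h
    · simp [h, h.ne']
    · simp [hdiag]
    · simp [htriang n m h, h.ne, h.not_gt]

theorem norm_biorthogonalize_le {f : ℕ → StrongDual 𝕜 E} {x : ℕ → E} (hf : ∀ n, ‖f n‖ ≤ 1)
    (hx : ∀ n, ‖x n‖ ≤ 1) (n : ℕ) : ‖biorthogonalize f x n‖ ≤ 2 ^ n := by
  induction n using Nat.strong_induction_on with
  | _ n ih =>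
    have hcoeff (k : ℕ) : ‖f n (x k)‖ ≤ 1 :=
      ((f n).le_opNorm (x k)).trans (mul_le_one₀ (hf n) (norm_nonneg _) (hx k))
    calc ‖biorthogonalize f x n‖
        ≤ ‖f n‖ + ∑ k ∈ range n, ‖f n (x k)‖ * ‖biorthogonalize f x k‖ := by
          rw [biorthogonalize_eq]
          refine (norm_sub_le _ _).trans ?_
          gcongr
          exact (norm_sum_le _ _).trans_eq (by simp only [norm_smul])
      _ ≤ 1 + ∑ k ∈ range n, (2 : ℝ) ^ k := by
          gcongr with k hk
          · exact hf n
          · exact (mul_le_of_le_one_left (norm_nonneg _) (hcoeff k)).trans (ih k (mem_range.1 hk))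
      _ = 2 ^ n := by
          rw [geom_sum_eq (by norm_num : (2 : ℝ) ≠ 1)]
          ring

end Biorthogonalize

section

variable {𝕜 E F : Type*} [RCLike 𝕜]
  [NormedAddCommGroup E] [NormedSpace 𝕜 E] [NormedAddCommGroup F] [NormedSpace 𝕜 F]

theorem exists_seq_triangular_norm_apply_lt (T : E →L[𝕜] F)
    (hT : ∀ (s : Finset (StrongDual 𝕜 E)) (δ : ℝ), 0 < δ →
      ∃ x, (∀ f ∈ s, f x = 0) ∧ ‖T x‖ < δ * ‖x‖)
    {δ : ℕ → ℝ} (hδ_pos : ∀ n, 0 < δ n) (hδ_anti : Antitone δ) :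
    ∃ (x : ℕ → E) (f : ℕ → StrongDual 𝕜 E), (∀ n, ‖x n‖ = 1) ∧ (∀ n, ‖f n‖ = 1) ∧
      (∀ n, f n (x n) = 1) ∧ (∀ m n, m < n → f m (x n) = 0) ∧ ∀ n, ‖T (x n)‖ < δ n := by
  classical
  have hnorming (v : E) : ∃ g : StrongDual 𝕜 E, ‖v‖ = 1 → ‖g‖ = 1 ∧ g v = 1 := by
    by_cases hv : ‖v‖ = 1
    · obtain ⟨g, hg, hgv⟩ := exists_dual_vector 𝕜 v (by simp [hv])
      exact ⟨g, fun _ ↦ ⟨hg, by simp [hgv, hv]⟩⟩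
    · exact ⟨0, fun h ↦ absurd h hv⟩
  choose g hg using hnorming
  -- Tagging each point with an index at least its position lets `δ` shrink along the sequence.
  obtain ⟨u, hu, hrel⟩ := exists_seq_of_forall_finset_exists
    (fun p : ℕ × E ↦ ‖p.2‖ = 1 ∧ ‖T p.2‖ < δ p.1) (fun p q ↦ p.1 < q.1 ∧ g p.2 q.2 = 0)
    fun s _ ↦ by
      set n := s.sup Prod.fst + 1
      obtain ⟨z, hz, hTz⟩ := hT (s.image fun p ↦ g p.2) (δ n) (hδ_pos n)
      have hz0 : z ≠ 0 := by rintro rfl; simp at hTz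
      refine ⟨(n, (‖z‖⁻¹ : 𝕜) • z), ⟨norm_smul_inv_norm hz0, ?_⟩, fun p hp ↦ ⟨?_, ?_⟩⟩
      · rw [map_smul, norm_smul, norm_inv, RCLike.norm_ofReal, abs_norm,
          inv_mul_lt_iff₀ (norm_pos_iff.2 hz0)]
        linarith
      · exact Nat.lt_succ_of_le (Finset.le_sup hp)
      · simp [hz _ (Finset.mem_image_of_mem _ hp)]
  have hindex : StrictMono fun n ↦ (u n).1 := fun m n h ↦ (hrel m n h).1
  exact ⟨fun n ↦ (u n).2, fun n ↦ g (u n).2, fun n ↦ (hu n).1, fun n ↦ (hg _ (hu n).1).1,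
    fun n ↦ (hg _ (hu n).1).2, fun m n h ↦ (hrel m n h).2,
    fun n ↦ (hu n).2.trans_le (hδ_anti hindex.le_apply)⟩

theorem exists_small_compact_restriction_of_not_isClosed_range
    [CompleteSpace E] [CompleteSpace F] (T : E →L[𝕜] F)
    (hT : ¬IsClosed ((LinearMap.range (T : E →ₗ[𝕜] F) : Submodule 𝕜 F) : Set F))
    {ε : ℝ} (hε : 0 < ε) :
    ∃ Y : Submodule 𝕜 E, IsClosed (Y : Set E) ∧ ¬FiniteDimensional 𝕜 Y ∧
      (∃ C : ℝ, 0 ≤ C ∧ C < ε ∧ ∀ y ∈ Y, ‖T y‖ ≤ C * ‖y‖) ∧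
      IsCompactOperator (fun y : Y ↦ T (y : E)) := by
  obtain ⟨x, f, hx, hf, hdiag, htriang, hTx⟩ := exists_seq_triangular_norm_apply_lt T
    (T.exists_forall_apply_eq_zero_norm_lt_of_not_isClosed_range hT)
    (δ := fun n ↦ ε / 4 * 4⁻¹ ^ n) (fun n ↦ by positivity)
    fun m n h ↦ mul_le_mul_of_nonneg_left (pow_le_pow_of_le_one (by norm_num) (by norm_num) h)
      (by positivity)
  set c := biorthogonalize f x
  have hc := biorthogonalize_apply hdiag htriang
  -- The decay `4⁻¹ ^ k` of `‖T (x k)‖` beats the growth `2 ^ k` of `‖c k‖`.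
  have hterm (k : ℕ) : ‖c k‖ * ‖T (x k)‖ ≤ ε / 4 * (1 / 2) ^ k :=
    calc ‖c k‖ * ‖T (x k)‖ ≤ 2 ^ k * (ε / 4 * 4⁻¹ ^ k) := by
          gcongr
          · exact norm_biorthogonalize_le (fun n ↦ (hf n).le) (fun n ↦ (hx n).le) k
          · exact (hTx k).le
      _ = ε / 4 * (1 / 2) ^ k := by
          rw [mul_left_comm, ← mul_pow]
          norm_num
  have hsum : Summable fun k ↦ ‖c k‖ * ‖T (x k)‖ :=
    .of_nonneg_of_le (fun _ ↦ by positivity) hterm (summable_geometric_two.mul_left _)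
  set S := ∑' k, (c k).smulRight (T (x k))
  have hS : ‖S‖ ≤ ε / 2 :=
    calc ‖S‖ ≤ ∑' k, ‖c k‖ * ‖T (x k)‖ := norm_tsum_smulRight_le hsum
      _ ≤ ∑' k, ε / 4 * (1 / 2) ^ k := hsum.tsum_le_tsum hterm (summable_geometric_two.mul_left _)
      _ = ε / 2 := by
          rw [tsum_mul_left, tsum_geometric_two]
          ring
  set Y := (Submodule.span 𝕜 (range x)).topologicalClosure
  have hTS : EqOn T S Y := by
    rw [Submodule.topologicalClosure_coe]
    refine ContinuousLinearMap.eqOn_closure_span ?_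
    rintro _ ⟨m, rfl⟩
    exact (tsum_smulRight_apply_of_apply_eq_ite hc hsum m).symm
  refine ⟨Y, Submodule.isClosed_topologicalClosure _,
    not_finiteDimensional_of_linearIndependent
      (linearIndependent_of_apply_eq_ite (c := fun i ↦ (c i : E →ₗ[𝕜] 𝕜)) hc)
      fun n ↦ Submodule.le_topologicalClosure _ (Submodule.subset_span ⟨n, rfl⟩),
    ⟨‖S‖, norm_nonneg _, by linarith, fun y hy ↦ hTS hy ▸ S.le_opNorm y⟩, ?_⟩
  have hrestrict : (fun y : Y ↦ T y) = S ∘ Y.subtypeL := funext fun y ↦ hTS y.2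
  rw [hrestrict]
  exact (isCompactOperator_tsum_smulRight hsum).comp_clm Y.subtypeL

end

/-- If a bounded operator `T : X → X` on a Banach space fails to be upper semi-Fredholm
(i.e. it is not the case that `ker T` is finite-dimensional and `range T` is closed), then
for every `ε > 0` there is an infinite-dimensional closed subspace `Y_ε ⊆ X` with
`‖T|_{Y_ε}‖ < ε`, and the restriction of `T` to `Y_ε` is compact. -/
theorem small_restriction_of_not_upperSemiFredholm {X : Type*} [NormedAddCommGroup X]
    [NormedSpace ℝ X] [CompleteSpace X] (T : X →L[ℝ] X)
    (hT : ¬ (FiniteDimensional ℝ (LinearMap.ker (T : X →ₗ[ℝ] X)) ∧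
      IsClosed ((LinearMap.range (T : X →ₗ[ℝ] X) : Submodule ℝ X) : Set X))) :
    ∀ ε : ℝ, 0 < ε → ∃ Y : Submodule ℝ X, IsClosed (Y : Set X) ∧
      ¬ FiniteDimensional ℝ Y ∧
      (∃ C : ℝ, 0 ≤ C ∧ C < ε ∧ ∀ y ∈ Y, ‖T y‖ ≤ C * ‖y‖) ∧
      IsCompactOperator (fun y : Y => T (y : X)) := by
  intro ε hε
  rcases not_and_or.mp hT with hker | hrange
  · refine ⟨LinearMap.ker (T : X →ₗ[ℝ] X), T.isClosed_ker, hker,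
      ⟨0, le_rfl, hε, fun y hy ↦ by simp [show T y = 0 from hy]⟩, ?_⟩
    convert isCompactOperator_zero (M₁ := LinearMap.ker (T : X →ₗ[ℝ] X)) (M₂ := X) using 1
    exact funext fun y ↦ y.2
  · exact exists_small_compact_restriction_of_not_isClosed_range T hrange hε
end

section
/- The only idempotent elements of the Banach algebra ℓ¹(ℕ₀) under convolution are 0 and the unit element e_0 = (1,0,0,…). Consequently, any Banach space whose Calkin algebra is isomorphic as a Banach algebra to ℓ¹(ℕ₀) is indecomposable: every bounded projection P on X has either P or I − P compact. -/
/-- Key combinatorial lemma: idempotents of the convolution algebra of sequences. -/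
lemma conv_idem_aux (a : ℕ → ℝ)
    (h : ∀ n : ℕ, ∑ j ∈ Finset.range (n + 1), a j * a (n - j) = a n) :
    (∀ n, a n = 0) ∨ (a 0 = 1 ∧ ∀ n, 0 < n → a n = 0) := by
  have h0 : a 0 * a 0 = a 0 := by simpa using h 0
  have h01 : a 0 = 0 ∨ a 0 = 1 := by
    rcases mul_eq_zero.mp (show a 0 * (a 0 - 1) = 0 by ring_nf; linarith [h0]) with h' | h'
    · exact Or.inl h'
    · exact Or.inr (by linarith)
  rcases h01 with h0' | h0'
  · left
    intro n
    induction n using Nat.strong_induction_on with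
    | _ n IH =>
      rcases Nat.eq_zero_or_pos n with rfl | hn
      · exact h0'
      · rw [← h n]
        apply Finset.sum_eq_zero
        intro j hj
        have hj' : j ≤ n := Nat.lt_succ_iff.mp (Finset.mem_range.mp hj)
        rcases Nat.eq_zero_or_pos j with rfl | hjpos
        · simp [h0']
        · rcases lt_or_eq_of_le hj' with hlt | rfl
          · rw [IH j hlt, zero_mul]
          · simp [h0']
  · right
    refine ⟨h0', ?_⟩
    intro n hn
    induction n using Nat.strong_induction_on with
    | _ n IH =>
      obtain ⟨m, rfl⟩ := Nat.exists_eq_add_of_lt hn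
      simp only [Nat.zero_add] at *
      have hsum := h (m + 1)
      rw [Finset.sum_range_succ, Finset.sum_range_succ'] at hsum
      have hmid : ∑ j ∈ Finset.range m, a (j + 1) * a (m + 1 - (j + 1)) = 0 := by
        apply Finset.sum_eq_zero
        intro j hj
        have hjm : j < m := Finset.mem_range.mp hj
        rw [IH (j + 1) (by omega) (Nat.succ_pos j), zero_mul]
      simp only [hmid, Nat.sub_zero, Nat.sub_self, h0', zero_add, one_mul, mul_one] at hsum
      linarith

/-- The only idempotents of the convolution Banach algebra `ℓ¹(ℕ₀)` are `0` and the unit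
`e₀ = (1,0,0,…)`.  Consequently, any Banach space `X` whose Calkin algebra is isomorphic
as a Banach algebra to `ℓ¹(ℕ₀)` (the isomorphism encoded by `φ` as below) is
indecomposable: for every bounded projection `P` on `X`, either `P` or `I − P` is
compact. -/
theorem ell1_idempotents_and_indecomposable {X : Type*} [NormedAddCommGroup X]
    [NormedSpace ℝ X] [CompleteSpace X]
    (φ : (X →L[ℝ] X) →ₗ[ℝ] lp (fun _ : ℕ => ℝ) 1)
    (hmul : ∀ T S : X →L[ℝ] X, ∀ n : ℕ,
      (φ (T.comp S) : ℕ → ℝ) n =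
        ∑ j ∈ Finset.range (n + 1), (φ T : ℕ → ℝ) j * (φ S : ℕ → ℝ) (n - j))
    (hker : ∀ T : X →L[ℝ] X, φ T = 0 ↔ IsCompactOperator ⇑T)
    (hsurj : Function.Surjective φ)
    (hbdd : ∃ C₁ : ℝ, 0 < C₁ ∧ ∃ C₂ : ℝ, 0 < C₂ ∧ ∀ T : X →L[ℝ] X,
      C₁ * sInf {r : ℝ | ∃ K : X →L[ℝ] X, IsCompactOperator ⇑K ∧ r = ‖T - K‖} ≤ ‖φ T‖ ∧
      ‖φ T‖ ≤ C₂ * sInf {r : ℝ | ∃ K : X →L[ℝ] X, IsCompactOperator ⇑K ∧ r = ‖T - K‖}) :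
    (∀ a : lp (fun _ : ℕ => ℝ) 1,
      (∀ n : ℕ, ∑ j ∈ Finset.range (n + 1),
          (a : ℕ → ℝ) j * (a : ℕ → ℝ) (n - j) = (a : ℕ → ℝ) n) →
      a = 0 ∨ ((a : ℕ → ℝ) 0 = 1 ∧ ∀ n : ℕ, 0 < n → (a : ℕ → ℝ) n = 0)) ∧
    (∀ P : X →L[ℝ] X, P.comp P = P →
      IsCompactOperator ⇑P ∨ IsCompactOperator ⇑(ContinuousLinearMap.id ℝ X - P)) := by
  have part1 : ∀ a : lp (fun _ : ℕ => ℝ) 1,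
      (∀ n : ℕ, ∑ j ∈ Finset.range (n + 1),
          (a : ℕ → ℝ) j * (a : ℕ → ℝ) (n - j) = (a : ℕ → ℝ) n) →
      a = 0 ∨ ((a : ℕ → ℝ) 0 = 1 ∧ ∀ n : ℕ, 0 < n → (a : ℕ → ℝ) n = 0) := by
    intro a ha
    rcases conv_idem_aux (a : ℕ → ℝ) ha with h | h
    · left
      apply lp.ext
      funext n
      simpa using h n
    · exact Or.inr h
  refine ⟨part1, ?_⟩
  intro P hP
  have haP : ∀ n : ℕ, ∑ j ∈ Finset.range (n + 1),
      (φ P : ℕ → ℝ) j * (φ P : ℕ → ℝ) (n - j) = (φ P : ℕ → ℝ) n := by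
    intro n
    rw [← hmul P P n, hP]
  rcases part1 (φ P) haP with hP0 | hPe
  · exact Or.inl ((hker P).mp hP0)
  · -- φ P = e₀; consider the identity
    have hid : (ContinuousLinearMap.id ℝ X).comp (ContinuousLinearMap.id ℝ X)
        = ContinuousLinearMap.id ℝ X := rfl
    have haI : ∀ n : ℕ, ∑ j ∈ Finset.range (n + 1),
        (φ (ContinuousLinearMap.id ℝ X) : ℕ → ℝ) j *
          (φ (ContinuousLinearMap.id ℝ X) : ℕ → ℝ) (n - j)
        = (φ (ContinuousLinearMap.id ℝ X) : ℕ → ℝ) n := by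
      intro n
      rw [← hmul _ _ n, hid]
    rcases part1 (φ (ContinuousLinearMap.id ℝ X)) haI with hI0 | hIe
    · -- identity is compact, hence P is compact
      have hidc : IsCompactOperator ⇑(ContinuousLinearMap.id ℝ X) :=
        (hker _).mp hI0
      left
      have : IsCompactOperator (⇑P ∘ ⇑(ContinuousLinearMap.id ℝ X)) :=
        hidc.continuous_comp P.continuous
      simpa using this
    · right
      apply (hker _).mp
      have heq : φ (ContinuousLinearMap.id ℝ X) = φ P := by
        apply lp.ext
        funext n
        rcases Nat.eq_zero_or_pos n with rfl | hn
        · rw [hIe.1, hPe.1]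
        · rw [hIe.2 n hn, hPe.2 n hn]
      rw [map_sub, heq, sub_self]
end
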